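/- Let λ > 0 and t₁, t₂ ∈ ℝ with t₁ ≠ t₂. Let I and J be nonempty finite index sets and f : I → ℝ^d, g : J → ℝ^d, with f_i ≠ g_j for all (i, j) ∈ I × J (class separability). For each pair b = (i, j) ∈ I × J let (θ̄_b, θ⁰_b) be the unique global minimizer of the two-point ridge objective for the samples (f_i, t₁) and (g_j, t₂). Assume the classifier-anonymized first-order optimality conditions: for every i ∈ I, (E_b θ̄_b θ̄_bᵀ) f_i = E_b (t₁ − θ⁰_b) θ̄_b, and for every j ∈ J, (E_b θ̄_b θ̄_bᵀ) g_j = E_b (t₂ − θ⁰_b) θ̄_b, where E_b denotes the average over all pairs b ∈ I × J. Then all features of the same class coincide — f_i = f_{i′} for all i, i′ ∈ I and g_j = g_{j′} for all j, j′ ∈ J — while features of different classes differ: f_i ≠ g_j for all i ∈ I, j ∈ J. -/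

import Mathlib

open Matrix

/-- If `0 ≤ A ε² + B ε` for all `ε`, then `B = 0`. -/
lemma quad_coeff_zero (A B : ℝ) (h : ∀ ε : ℝ, 0 ≤ A * ε ^ 2 + B * ε) : B = 0 := by
  have key : ∀ t : ℝ, 0 < t → |B| ≤ A * t := by
    intro t ht
    have h1 := h t
    have h2 := h (-t)
    rw [abs_le]
    constructor <;> nlinarith
  by_contra hB
  have hA : 0 < A := by
    have := key 1 one_pos
    have := abs_pos.mpr hB
    linarith
  have hk2 := key (|B| / (2 * A)) (by positivity)
  have habs : 0 < |B| := abs_pos.mpr hB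
  have heq : A * (|B| / (2 * A)) = |B| / 2 := by field_simp
  rw [heq] at hk2
  linarith

lemma my_sum_mulVec {d : ℕ} {ι : Type*} (s : Finset ι) (M : ι → Matrix (Fin d) (Fin d) ℝ)
    (w : Fin d → ℝ) : (∑ b ∈ s, M b) *ᵥ w = ∑ b ∈ s, M b *ᵥ w := by
  ext k
  simp only [Matrix.mulVec, dotProduct, Finset.sum_apply, Matrix.sum_apply,
    Finset.sum_mul]
  rw [Finset.sum_comm]

lemma my_dotProduct_sum {d : ℕ} {ι : Type*} (s : Finset ι) (w : Fin d → ℝ)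
    (x : ι → Fin d → ℝ) : w ⬝ᵥ (∑ b ∈ s, x b) = ∑ b ∈ s, w ⬝ᵥ x b := by
  simp only [dotProduct, Finset.sum_apply, Finset.mul_sum]
  rw [Finset.sum_comm]

lemma my_vecMulVec_mulVec {d : ℕ} (u v x : Fin d → ℝ) :
    Matrix.vecMulVec u v *ᵥ x = (v ⬝ᵥ x) • u := by
  ext k
  simp only [Matrix.mulVec, Matrix.vecMulVec_apply, dotProduct, Pi.smul_apply,
    smul_eq_mul, Finset.sum_mul]
  refine Finset.sum_congr rfl fun i _ => by ring

/-- Mathematical core of Proposition 1: under class separability, if each batch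
classifier `(θ̄_b, θ⁰_b)` is the global minimizer of the two-point ridge objective
and the classifier-anonymized first-order optimality conditions
`(E_b θ̄_b θ̄_bᵀ) f = E_b (t − θ⁰_b) θ̄_b` hold for every sample, then features of
the same class coincide and features of different classes differ. -/
theorem stmt10 (d : ℕ) (lam : ℝ) (hlam : 0 < lam) (t₁ t₂ : ℝ) (ht : t₁ ≠ t₂)
    (I J : Type*) [Fintype I] [Fintype J] [Nonempty I] [Nonempty J]
    (f : I → (Fin d → ℝ)) (g : J → (Fin d → ℝ))
    (hsep : ∀ i j, f i ≠ g j)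
    (θbar : I × J → (Fin d → ℝ)) (θ0 : I × J → ℝ)
    (hmin : ∀ i j, ∀ q : (Fin d → ℝ) × ℝ,
      (θbar (i, j) ⬝ᵥ f i + θ0 (i, j) - t₁) ^ 2
          + (θbar (i, j) ⬝ᵥ g j + θ0 (i, j) - t₂) ^ 2
          + (lam / 2) * (θbar (i, j) ⬝ᵥ θbar (i, j)) ≤
        (q.1 ⬝ᵥ f i + q.2 - t₁) ^ 2 + (q.1 ⬝ᵥ g j + q.2 - t₂) ^ 2
          + (lam / 2) * (q.1 ⬝ᵥ q.1))
    (hfoc1 : ∀ i,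
      ((Fintype.card I * Fintype.card J : ℝ)⁻¹ •
          ∑ b : I × J, Matrix.vecMulVec (θbar b) (θbar b)) *ᵥ f i =
        (Fintype.card I * Fintype.card J : ℝ)⁻¹ •
          ∑ b : I × J, (t₁ - θ0 b) • θbar b)
    (hfoc2 : ∀ j,
      ((Fintype.card I * Fintype.card J : ℝ)⁻¹ •
          ∑ b : I × J, Matrix.vecMulVec (θbar b) (θbar b)) *ᵥ g j =
        (Fintype.card I * Fintype.card J : ℝ)⁻¹ •
          ∑ b : I × J, (t₂ - θ0 b) • θbar b) :
    (∀ i i', f i = f i') ∧ (∀ j j', g j = g j') ∧ (∀ i j, f i ≠ g j) := by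
  -- Step 1: each batch classifier is a nonzero multiple of the feature difference.
  have hform : ∀ i j, ∃ c : ℝ, c ≠ 0 ∧ θbar (i, j) = c • (f i - g j) := by
    intro i j
    set θ := θbar (i, j) with hθ
    set s := θ0 (i, j) with hs
    set r₁ : ℝ := θ ⬝ᵥ f i + s - t₁ with hr₁
    set r₂ : ℝ := θ ⬝ᵥ g j + s - t₂ with hr₂
    have hgrad : ∀ (v : Fin d → ℝ) (a : ℝ),
        2 * r₁ * (v ⬝ᵥ f i + a) + 2 * r₂ * (v ⬝ᵥ g j + a) + lam * (θ ⬝ᵥ v) = 0 := by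
      intro v a
      apply quad_coeff_zero ((v ⬝ᵥ f i + a) ^ 2 + (v ⬝ᵥ g j + a) ^ 2 + (lam / 2) * (v ⬝ᵥ v))
      intro ε
      have h := hmin i j (θ + ε • v, s + ε * a)
      simp only [add_dotProduct, dotProduct_add, smul_dotProduct,
        dotProduct_smul, smul_eq_mul] at h
      have hcomm : v ⬝ᵥ θ = θ ⬝ᵥ v := dotProduct_comm v θ
      rw [hcomm] at h
      nlinarith [h]
    have h0 : r₁ + r₂ = 0 := by
      have := hgrad 0 1
      simp [zero_dotProduct, dotProduct_zero] at this
      linarith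
    have hk : ∀ k, lam * θ k = -2 * r₁ * f i k - 2 * r₂ * g j k := by
      intro k
      have := hgrad (Pi.single k 1) 0
      simp [single_dotProduct, dotProduct_single] at this
      linarith
    have hr1ne : r₁ ≠ 0 := by
      intro hr0
      have hr20 : r₂ = 0 := by linarith
      have hθ0 : θ = 0 := by
        funext k
        have := hk k
        rw [hr0, hr20] at this
        have : lam * θ k = 0 := by linarith
        have := mul_eq_zero.mp this
        rcases this with h | h
        · exact absurd h (ne_of_gt hlam)
        · exact h
      rw [hθ0] at hr₁ hr₂
      simp [zero_dotProduct] at hr₁ hr₂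
      apply ht
      have e1 : s = t₁ := by rw [hr₁] at hr0; linarith
      have e2 : s = t₂ := by rw [hr₂] at hr20; linarith
      rw [← e1, ← e2]
    refine ⟨-2 * r₁ / lam, by
      simp only [ne_eq, div_eq_zero_iff]
      push_neg
      exact ⟨by simpa using hr1ne, ne_of_gt hlam⟩, ?_⟩
    funext k
    have hkk := hk k
    have hr2 : r₂ = -r₁ := by linarith
    rw [hr2] at hkk
    simp only [Pi.smul_apply, Pi.sub_apply, smul_eq_mul]
    field_simp
    linarith [hkk]
  -- notation for the scalar
  set c : ℝ := (Fintype.card I * Fintype.card J : ℝ)⁻¹ with hc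
  have hcne : c ≠ 0 := by
    rw [hc]
    apply inv_ne_zero
    have h1 : (0 : ℝ) < Fintype.card I := by positivity
    have h2 : (0 : ℝ) < Fintype.card J := by positivity
    positivity
  -- Step 2: if the averaged matrix kills w, then every θbar b is orthogonal to w.
  have horth : ∀ w : Fin d → ℝ,
      ((c • ∑ b : I × J, Matrix.vecMulVec (θbar b) (θbar b)) *ᵥ w = 0) →
      ∀ b : I × J, θbar b ⬝ᵥ w = 0 := by
    intro w hw b
    have hcomp : (c • ∑ b : I × J, Matrix.vecMulVec (θbar b) (θbar b)) *ᵥ w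
        = c • ∑ b : I × J, (θbar b ⬝ᵥ w) • θbar b := by
      rw [Matrix.smul_mulVec, my_sum_mulVec]
      congr 1
      refine Finset.sum_congr rfl fun b _ => ?_
      exact my_vecMulVec_mulVec _ _ _
    rw [hcomp] at hw
    have hdot : w ⬝ᵥ (c • ∑ b : I × J, (θbar b ⬝ᵥ w) • θbar b) = 0 := by
      rw [hw]; exact dotProduct_zero w
    rw [dotProduct_smul, my_dotProduct_sum, smul_eq_mul] at hdot
    have hsq : ∑ b : I × J, (θbar b ⬝ᵥ w) ^ 2 = 0 := by
      have : ∑ b : I × J, w ⬝ᵥ ((θbar b ⬝ᵥ w) • θbar b)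
          = ∑ b : I × J, (θbar b ⬝ᵥ w) ^ 2 := by
        refine Finset.sum_congr rfl fun b _ => ?_
        rw [dotProduct_smul, smul_eq_mul, dotProduct_comm]
        ring
      rw [this] at hdot
      rcases mul_eq_zero.mp hdot with h | h
      · exact absurd h hcne
      · exact h
    have := (Finset.sum_eq_zero_iff_of_nonneg (fun b _ => sq_nonneg (θbar b ⬝ᵥ w))).mp hsq
    have := this b (Finset.mem_univ b)
    exact pow_eq_zero_iff (n := 2) (by norm_num) |>.mp this
  -- From orthogonality to all θbar b, get orthogonality to all feature differences
  have hdiff : ∀ w : Fin d → ℝ,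
      (∀ b : I × J, θbar b ⬝ᵥ w = 0) → ∀ i j, (f i - g j) ⬝ᵥ w = 0 := by
    intro w hw i j
    obtain ⟨cb, hcb, hform'⟩ := hform i j
    have := hw (i, j)
    rw [hform', smul_dotProduct, smul_eq_mul] at this
    rcases mul_eq_zero.mp this with h | h
    · exact absurd h hcb
    · exact h
  -- Same class within I
  have hI : ∀ i i', f i = f i' := by
    intro i i'
    set w := f i - f i' with hwdef
    have hzero : (c • ∑ b : I × J, Matrix.vecMulVec (θbar b) (θbar b)) *ᵥ w = 0 := by
      rw [hwdef, Matrix.mulVec_sub, hfoc1 i, hfoc1 i', sub_self]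
    have hw := hdiff w (horth w hzero)
    obtain ⟨j⟩ := (inferInstance : Nonempty J)
    have h1 := hw i j
    have h2 := hw i' j
    have hww : w ⬝ᵥ w = 0 := by
      have : (f i - g j) ⬝ᵥ w - (f i' - g j) ⬝ᵥ w = w ⬝ᵥ w := by
        rw [← sub_dotProduct]
        congr 1
        rw [hwdef]
        abel
      rw [h1, h2] at this
      linarith
    have := dotProduct_self_eq_zero.mp hww
    rw [hwdef] at this
    exact sub_eq_zero.mp this
  -- Same class within J
  have hJ : ∀ j j', g j = g j' := by
    intro j j'
    set w := g j - g j' with hwdef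
    have hzero : (c • ∑ b : I × J, Matrix.vecMulVec (θbar b) (θbar b)) *ᵥ w = 0 := by
      rw [hwdef, Matrix.mulVec_sub, hfoc2 j, hfoc2 j', sub_self]
    have hw := hdiff w (horth w hzero)
    obtain ⟨i⟩ := (inferInstance : Nonempty I)
    have h1 := hw i j
    have h2 := hw i j'
    have hww : w ⬝ᵥ w = 0 := by
      have : (f i - g j') ⬝ᵥ w - (f i - g j) ⬝ᵥ w = w ⬝ᵥ w := by
        rw [← sub_dotProduct]
        congr 1
        rw [hwdef]
        abel
      rw [h1, h2] at this
      linarith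
    have := dotProduct_self_eq_zero.mp hww
    rw [hwdef] at this
    exact sub_eq_zero.mp this
  exact ⟨hI, hJ, hsep⟩
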